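/- Let T be a bounded linear operator on a complex Hilbert space H. Then for all vectors x, y ∈ H, ⟨|T| x, x⟩ + 2 Re⟨T x, y⟩ + ⟨|T*| y, y⟩ ≥ 0; that is, the 2×2 operator matrix [[|T|, T*], [T, |T*|]] acting on H ⊕ H is a positive operator, where |T| = (T*T)^{1/2}. -/

import Mathlib

/-!
`T` intertwines `T*T` and `TT*`, hence their polynomials, hence (Stone–Weierstrass on a compact set
containing both spectra) their continuous functions: `T f(T*T) = f(TT*) T`. For `g = √· + δ` this
gives `⟨Tx, y⟩ = ⟨g(T*T)^{1/2} x, T* g(TT*)^{-1/2} y⟩`, so by Cauchy–Schwarz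
`|⟨Tx, y⟩|² ≤ ⟨(|T| + δ) x, x⟩ ⟨TT* (|T*| + δ)⁻¹ y, y⟩ ≤ (⟨|T| x, x⟩ + δ‖x‖²) ⟨|T*| y, y⟩`.
Letting `δ → 0` gives `|⟨Tx, y⟩|² ≤ ⟨|T| x, x⟩ ⟨|T*| y, y⟩`, and `a + 2c + b ≥ 0` whenever
`a, b ≥ 0` and `c² ≤ ab`.
-/

open ContinuousLinearMap Filter
open scoped InnerProductSpace Topology

section Intertwining

variable {A : Type*} [Ring A] [StarRing A] [Algebra ℝ A] [TopologicalSpace A]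
  [ContinuousFunctionalCalculus ℝ A IsSelfAdjoint] [IsTopologicalRing A] [T2Space A]

protected theorem SemiconjBy.cfcHomSuperset {x b c : A} (h : SemiconjBy x b c)
    (hb : IsSelfAdjoint b) (hc : IsSelfAdjoint c) {s : Set ℝ} [CompactSpace s]
    (hbs : spectrum ℝ b ⊆ s) (hcs : spectrum ℝ c ⊆ s) (f : C(s, ℝ)) :
    SemiconjBy x (cfcHomSuperset hb hbs f) (cfcHomSuperset hc hcs f) := by
  induction f using ContinuousMap.induction_on_of_compact with
  | const r =>
    change SemiconjBy x (cfcHomSuperset hb hbs (algebraMap ℝ _ r))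
      (cfcHomSuperset hc hcs (algebraMap ℝ _ r))
    rw [AlgHomClass.commutes, AlgHomClass.commutes]
    exact Algebra.commute_algebraMap_right r x
  | id => rwa [cfcHomSuperset_id, cfcHomSuperset_id]
  | star_id => rwa [star_trivial, cfcHomSuperset_id, cfcHomSuperset_id]
  | add f g hf hg => rw [map_add, map_add]; exact hf.add_right hg
  | mul f g hf hg => rw [map_mul, map_mul]; exact hf.mul_right hg
  | frequently f hf =>
    have hclosed : IsClosed
        {g : C(s, ℝ) | SemiconjBy x (cfcHomSuperset hb hbs g) (cfcHomSuperset hc hcs g)} :=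
      isClosed_eq (continuous_const.mul (cfcHomSuperset_continuous hb hbs))
        ((cfcHomSuperset_continuous hc hcs).mul continuous_const)
    exact hclosed.mem_of_frequently_of_tendsto hf tendsto_id

protected theorem SemiconjBy.cfc_real {x b c : A} (h : SemiconjBy x b c)
    (hb : IsSelfAdjoint b) (hc : IsSelfAdjoint c) (f : ℝ → ℝ)
    (hf : ContinuousOn f (spectrum ℝ b ∪ spectrum ℝ c)) :
    SemiconjBy x (cfc f b) (cfc f c) := by
  have : CompactSpace ↥(spectrum ℝ b ∪ spectrum ℝ c) := isCompact_iff_compactSpace.mp <|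
    (ContinuousFunctionalCalculus.isCompact_spectrum b).union
      (ContinuousFunctionalCalculus.isCompact_spectrum c)
  rw [cfc_apply f b hb (hf.mono Set.subset_union_left),
    cfc_apply f c hc (hf.mono Set.subset_union_right)]
  exact h.cfcHomSuperset hb hc Set.subset_union_left Set.subset_union_right ⟨_, hf.domRestrict⟩

theorem mul_cfc_star_mul_self (a : A) (f : ℝ → ℝ) (hf : Continuous f) :
    a * cfc f (star a * a) = cfc f (a * star a) * a :=
  SemiconjBy.cfc_real (mul_assoc a (star a) a).symm
    (.star_mul_self a) (.mul_star_self a) f hf.continuousOn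

end Intertwining

namespace ContinuousLinearMap

section RCLike

variable {𝕜 E : Type*} [RCLike 𝕜] [NormedAddCommGroup E] [InnerProductSpace 𝕜 E]

theorem re_inner_le_re_inner_of_le {P Q : E →L[𝕜] E} (h : P ≤ Q) (z : E) :
    RCLike.re ⟪P z, z⟫_𝕜 ≤ RCLike.re ⟪Q z, z⟫_𝕜 := by
  have := ((le_def P Q).mp h).re_inner_nonneg_left z
  rw [sub_apply, inner_sub_left, map_sub] at this
  exact sub_nonneg.mp this

theorem re_inner_nonneg_of_nonneg {P : E →L[𝕜] E} (hP : 0 ≤ P) (z : E) :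
    0 ≤ RCLike.re ⟪P z, z⟫_𝕜 :=
  ((nonneg_iff_isPositive P).mp hP).re_inner_nonneg_left z

end RCLike

variable {H : Type*} [NormedAddCommGroup H] [InnerProductSpace ℂ H] [CompleteSpace H]

theorem norm_inner_apply_sq_le_re_inner_cfc_mul (T : H →L[ℂ] H) {g : ℝ → ℝ}
    (hg : Continuous g) (hg_pos : ∀ t, 0 < g t) (x y : H) :
    ‖⟪T x, y⟫_ℂ‖ ^ 2 ≤ (⟪cfc g (adjoint T * T) x, x⟫_ℂ).re *
      (⟪cfc (fun t => t / g t) (T * adjoint T) y, y⟫_ℂ).re := by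
  set A := adjoint T * T
  set B := T * adjoint T
  have hA : IsSelfAdjoint A := IsSelfAdjoint.star_mul_self T
  have hB : IsSelfAdjoint B := IsSelfAdjoint.mul_star_self T
  have hsqrt_pos (t : ℝ) : 0 < √(g t) := Real.sqrt_pos.mpr (hg_pos t)
  set φ : ℝ → ℝ := fun t => √(g t)
  set ψ : ℝ → ℝ := fun t => (√(g t))⁻¹
  have hφ : Continuous φ := hg.sqrt
  have hψ : Continuous ψ := hφ.inv₀ fun t => (hsqrt_pos t).ne'
  set P := cfc φ A
  set Q := cfc ψ B
  have hP : adjoint P = P := (cfc_predicate φ A).adjoint_eq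
  have hQ : adjoint Q = Q := (cfc_predicate ψ B).adjoint_eq
  have hψφ : cfc ψ A * P = 1 := by
    rw [← cfc_mul ψ φ A hψ.continuousOn hφ.continuousOn, ← cfc_one ℝ A]
    exact cfc_congr fun t _ => inv_mul_cancel₀ (hsqrt_pos t).ne'
  have hintertwine : T * cfc ψ A = Q * T := mul_cfc_star_mul_self T ψ hψ
  have hTx : T x = Q (T (P x)) := by
    rw [← mul_apply_eq_comp Q, ← hintertwine, mul_apply_eq_comp, ← mul_apply_eq_comp (cfc ψ A),
      hψφ, one_apply_eq_self]
  have hinner : ⟪T x, y⟫_ℂ = ⟪P x, adjoint T (Q y)⟫_ℂ := by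
    rw [hTx, ← adjoint_inner_right, ← adjoint_inner_right, hQ]
  have hPP : P * P = cfc g A := by
    rw [← cfc_mul φ φ A hφ.continuousOn hφ.continuousOn]
    exact cfc_congr fun t _ => Real.mul_self_sqrt (hg_pos t).le
  have hQBQ : Q * B * Q = cfc (fun t => t / g t) B := by
    conv_lhs => rw [← cfc_id' ℝ B]
    rw [← cfc_mul ψ (fun t => t) B hψ.continuousOn continuousOn_id,
      ← cfc_mul (fun t => ψ t * t) ψ B (hψ.mul continuous_id').continuousOn hψ.continuousOn]
    refine cfc_congr fun t _ => ?_
    simp only [ψ]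
    field_simp
    rw [Real.sq_sqrt (hg_pos t).le]
  have hPx : ‖P x‖ ^ 2 = (⟪cfc g A x, x⟫_ℂ).re := by
    rw [apply_norm_sq_eq_inner_adjoint_left, hP, ← mul_def, hPP]
    rfl
  have hQy : ‖adjoint T (Q y)‖ ^ 2 = (⟪cfc (fun t => t / g t) B y, y⟫_ℂ).re := by
    rw [← comp_apply, apply_norm_sq_eq_inner_adjoint_left, adjoint_comp, hQ, adjoint_adjoint,
      ← hQBQ]
    rfl
  calc ‖⟪T x, y⟫_ℂ‖ ^ 2 ≤ (‖P x‖ * ‖adjoint T (Q y)‖) ^ 2 := by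
        rw [hinner]; gcongr; exact norm_inner_le_norm _ _
    _ = _ := by rw [mul_pow, hPx, hQy]

theorem norm_inner_apply_sq_le_re_inner_sqrt_add_mul (T : H →L[ℂ] H) (x y : H) {δ : ℝ}
    (hδ : 0 < δ) :
    ‖⟪T x, y⟫_ℂ‖ ^ 2 ≤ ((⟪CFC.sqrt (adjoint T * T) x, x⟫_ℂ).re + δ * ‖x‖ ^ 2) *
      (⟪CFC.sqrt (T * adjoint T) y, y⟫_ℂ).re := by
  set A := adjoint T * T
  set B := T * adjoint T
  have hA : 0 ≤ A := star_mul_self_nonneg T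
  have hB : 0 ≤ B := mul_star_self_nonneg T
  have hsqrt (S : H →L[ℂ] H) (hS : 0 ≤ S) : CFC.sqrt S = cfc Real.sqrt S := by
    rw [CFC.sqrt_eq_real_sqrt S hS, cfcₙ_eq_cfc]
  have hg : cfc (fun t => √t + δ) A = CFC.sqrt A + algebraMap ℝ _ δ := by
    rw [cfc_add .., cfc_const δ A, hsqrt A hA]
  have hx : (⟪cfc (fun t => √t + δ) A x, x⟫_ℂ).re =
      (⟪CFC.sqrt A x, x⟫_ℂ).re + δ * ‖x‖ ^ 2 := by
    rw [hg, add_apply, inner_add_left, Complex.add_re, Algebra.algebraMap_eq_smul_one,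
      smul_apply, one_apply_eq_self, RCLike.real_smul_eq_coe_smul (K := ℂ), inner_smul_real_left,
      Complex.smul_re, smul_eq_mul, ← inner_self_eq_norm_sq (𝕜 := ℂ)]
    rfl
  have hy : (⟪cfc (fun t => t / (√t + δ)) B y, y⟫_ℂ).re ≤ (⟪CFC.sqrt B y, y⟫_ℂ).re := by
    refine re_inner_le_re_inner_of_le (𝕜 := ℂ) ?_ y
    rw [hsqrt B hB]
    have hcont : Continuous fun t => t / (√t + δ) :=
      continuous_id.div (by fun_prop) fun t => by positivity
    refine cfc_mono (hf := hcont.continuousOn) fun t ht => ?_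
    have ht0 : 0 ≤ t := spectrum_nonneg_of_nonneg hB ht
    rw [div_le_iff₀ (by positivity)]
    nlinarith [Real.mul_self_sqrt ht0, Real.sqrt_nonneg t]
  calc ‖⟪T x, y⟫_ℂ‖ ^ 2
      ≤ (⟪cfc (fun t => √t + δ) A x, x⟫_ℂ).re *
          (⟪cfc (fun t => t / (√t + δ)) B y, y⟫_ℂ).re :=
        norm_inner_apply_sq_le_re_inner_cfc_mul T (by fun_prop) (fun t => by positivity) x y
    _ ≤ _ := by
      rw [hx]
      exact mul_le_mul_of_nonneg_left hy
        (add_nonneg (re_inner_nonneg_of_nonneg (CFC.sqrt_nonneg A) x) (by positivity))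

theorem norm_inner_apply_sq_le_re_inner_sqrt_mul (T : H →L[ℂ] H) (x y : H) :
    ‖⟪T x, y⟫_ℂ‖ ^ 2 ≤
      (⟪CFC.sqrt (adjoint T * T) x, x⟫_ℂ).re * (⟪CFC.sqrt (T * adjoint T) y, y⟫_ℂ).re := by
  set a := (⟪CFC.sqrt (adjoint T * T) x, x⟫_ℂ).re
  set b := (⟪CFC.sqrt (T * adjoint T) y, y⟫_ℂ).re
  have hlim :
      Tendsto (fun δ : ℝ => (a + δ * ‖x‖ ^ 2) * b) (𝓝[>] 0) (𝓝 ((a + 0 * ‖x‖ ^ 2) * b)) :=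
    (Continuous.tendsto (by fun_prop) 0).mono_left nhdsWithin_le_nhds
  simpa using ge_of_tendsto hlim <| eventually_nhdsWithin_of_forall fun δ hδ =>
    norm_inner_apply_sq_le_re_inner_sqrt_add_mul T x y hδ

end ContinuousLinearMap

theorem opmatrix_positive {H : Type*} [NormedAddCommGroup H] [InnerProductSpace ℂ H]
    [CompleteSpace H] (T : H →L[ℂ] H) (x y : H) :
    0 ≤ (⟪CFC.sqrt (adjoint T * T) x, x⟫_ℂ).re + 2 * (⟪T x, y⟫_ℂ).re +
        (⟪CFC.sqrt (T * adjoint T) y, y⟫_ℂ).re := by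
  set a := (⟪CFC.sqrt (adjoint T * T) x, x⟫_ℂ).re
  set b := (⟪CFC.sqrt (T * adjoint T) y, y⟫_ℂ).re
  set c := (⟪T x, y⟫_ℂ).re
  have ha : 0 ≤ a := re_inner_nonneg_of_nonneg (CFC.sqrt_nonneg (adjoint T * T)) x
  have hb : 0 ≤ b := re_inner_nonneg_of_nonneg (CFC.sqrt_nonneg (T * adjoint T)) y
  have hc : c ^ 2 ≤ a * b :=
    calc c ^ 2 = |c| ^ 2 := (sq_abs c).symm
      _ ≤ ‖⟪T x, y⟫_ℂ‖ ^ 2 := by gcongr; exact Complex.abs_re_le_norm _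
      _ ≤ a * b := norm_inner_apply_sq_le_re_inner_sqrt_mul T x y
  nlinarith [sq_nonneg (a - b)]
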